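/- arXiv:1404.4104 — 4 statements merged into one kernel-verified Lean document; each statement's English description precedes it below -/
import Mathlib

section
/- Let ℓ(U,V,b) = (1/n) Σ_{i=1}^n log(1 + exp(−y_i (tr(Uᵀ X_i V) + b))). For every fixed V ∈ ℝ^{t×r}, the gradient map (U,b) ↦ (∇_U ℓ(U,V,b), ∇_b ℓ(U,V,b)) is Lipschitz continuous with Lipschitz constant L_u = (√2/n) Σ_{i=1}^n (‖X_i V‖_F + 1)², where the distance on pairs is ‖(U,b)−(Ũ,b̃)‖ = √(‖U−Ũ‖_F² + (b−b̃)²). -/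
/-! Both gradients are averages, against `Xᵢ V` and `1`, of the weights
`wᵢ = σ(-yᵢ zᵢ) yᵢ` with `zᵢ = tr(Uᵀ Xᵢ V) + b` and `σ` the logistic function.
Since `σ` is `1/4`-Lipschitz and `|yᵢ| = 1`, each weight moves by at most `|Δzᵢ| / 4`, and
Cauchy–Schwarz for the trace pairing bounds `|Δzᵢ|` by `(‖Xᵢ V‖_F + 1) ‖(ΔU, Δb)‖`.
The triangle inequality then gives the constant `(1/(4n)) Σᵢ (‖Xᵢ V‖_F + 1)²`, which is at most
`L_u`. -/

open Matrix BigOperators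

/-- Frobenius inner product of two real matrices. -/
noncomputable def frobInner {s r : ℕ} (A B : Matrix (Fin s) (Fin r) ℝ) : ℝ :=
  ∑ i, ∑ j, A i j * B i j

/-- Frobenius norm of a real matrix. -/
noncomputable def frobNorm {s r : ℕ} (A : Matrix (Fin s) (Fin r) ℝ) : ℝ :=
  Real.sqrt (∑ i, ∑ j, (A i j) ^ 2)

/-- The bilinear logistic loss
ℓ(U,V,b) = (1/n) Σᵢ log(1 + exp(−yᵢ (tr(Uᵀ Xᵢ V) + b))). -/
noncomputable def bilinLoss {n s t r : ℕ} (X : Fin n → Matrix (Fin s) (Fin t) ℝ)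
    (y : Fin n → ℝ) (U : Matrix (Fin s) (Fin r) ℝ) (V : Matrix (Fin t) (Fin r) ℝ)
    (b : ℝ) : ℝ :=
  (1 / (n : ℝ)) * ∑ i, Real.log (1 + Real.exp (-(y i) * ((Uᵀ * X i * V).trace + b)))

/-- ∇_U ℓ(U,V,b) = −(1/n) Σᵢ (1 + exp[yᵢ(tr(Uᵀ Xᵢ V) + b)])⁻¹ yᵢ Xᵢ V. -/
noncomputable def gradU {n s t r : ℕ} (X : Fin n → Matrix (Fin s) (Fin t) ℝ)
    (y : Fin n → ℝ) (U : Matrix (Fin s) (Fin r) ℝ) (V : Matrix (Fin t) (Fin r) ℝ)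
    (b : ℝ) : Matrix (Fin s) (Fin r) ℝ :=
  (-(1 / (n : ℝ))) •
    ∑ i, ((1 + Real.exp (y i * ((Uᵀ * X i * V).trace + b)))⁻¹ * y i) • (X i * V)

/-- ∇_b ℓ(U,V,b) = −(1/n) Σᵢ (1 + exp[yᵢ(tr(Uᵀ Xᵢ V) + b)])⁻¹ yᵢ. -/
noncomputable def gradB {n s t r : ℕ} (X : Fin n → Matrix (Fin s) (Fin t) ℝ)
    (y : Fin n → ℝ) (U : Matrix (Fin s) (Fin r) ℝ) (V : Matrix (Fin t) (Fin r) ℝ)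
    (b : ℝ) : ℝ :=
  (-(1 / (n : ℝ))) * ∑ i, (1 + Real.exp (y i * ((Uᵀ * X i * V).trace + b)))⁻¹ * y i

namespace Real

lemma lipschitzWith_sigmoid : LipschitzWith 4⁻¹ sigmoid := by
  refine lipschitzWith_of_nnnorm_deriv_le differentiable_sigmoid fun x => ?_
  rw [← NNReal.coe_le_coe, coe_nnnorm, deriv_sigmoid, Real.norm_eq_abs,
    abs_of_nonneg (mul_nonneg (sigmoid_nonneg x) (sub_nonneg.2 (sigmoid_le_one x)))]
  push_cast
  nlinarith [sq_nonneg (sigmoid x - 2⁻¹)]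

lemma inv_one_add_exp (x : ℝ) : (1 + exp x)⁻¹ = sigmoid (-x) := by
  rw [sigmoid_def, neg_neg]

lemma abs_inv_one_add_exp_mul_sub_le {y : ℝ} (hy : |y| ≤ 1) (z z' : ℝ) :
    |(1 + exp (y * z))⁻¹ * y - (1 + exp (y * z'))⁻¹ * y| ≤ 4⁻¹ * |z - z'| := by
  have hσ : |sigmoid (-(y * z)) - sigmoid (-(y * z'))| ≤ 4⁻¹ * (|y| * |z - z'|) := by
    simpa [Real.dist_eq, ← mul_sub, abs_mul, abs_sub_comm]
      using lipschitzWith_sigmoid.dist_le_mul (-(y * z)) (-(y * z'))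
  have hy2 : |y| * |y| ≤ 1 := mul_le_one₀ hy (abs_nonneg y) hy
  calc |(1 + exp (y * z))⁻¹ * y - (1 + exp (y * z'))⁻¹ * y|
      = |sigmoid (-(y * z)) - sigmoid (-(y * z'))| * |y| := by
        rw [inv_one_add_exp, inv_one_add_exp, ← sub_mul, abs_mul]
    _ ≤ 4⁻¹ * (|y| * |z - z'|) * |y| := by gcongr
    _ = 4⁻¹ * (|y| * |y|) * |z - z'| := by ring
    _ ≤ 4⁻¹ * 1 * |z - z'| := by gcongr
    _ = 4⁻¹ * |z - z'| := by ring

lemma sqrt_sq_add_sq_le (a b : ℝ) : √(a ^ 2 + b ^ 2) ≤ |a| + |b| := by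
  rw [sqrt_le_left (by positivity)]
  nlinarith [sq_abs a, sq_abs b, abs_nonneg a, abs_nonneg b]

end Real

section Frobenius

open scoped Matrix.Norms.Frobenius

variable {m n : Type*} [Fintype m] [Fintype n]

lemma Matrix.frobenius_norm_eq_sqrt (A : Matrix m n ℝ) : ‖A‖ = √(∑ i, ∑ j, A i j ^ 2) := by
  simp [frobenius_norm_def, Real.sqrt_eq_rpow]

lemma Matrix.trace_transpose_mul_le (A B : Matrix m n ℝ) : (Aᵀ * B).trace ≤ ‖A‖ * ‖B‖ := by
  have htr : (Aᵀ * B).trace = ∑ p : m × n, A p.1 p.2 * B p.1 p.2 := by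
    simp only [trace, diag, mul_apply, transpose_apply, Fintype.sum_prod_type]
    exact Finset.sum_comm
  simp only [htr, frobenius_norm_eq_sqrt, ← Fintype.sum_prod_type']
  exact Real.sum_mul_le_sqrt_mul_sqrt _ _ _

lemma Matrix.abs_trace_transpose_mul_le (A B : Matrix m n ℝ) :
    |(Aᵀ * B).trace| ≤ ‖A‖ * ‖B‖ := by
  refine abs_le.2 ⟨neg_le.1 ?_, trace_transpose_mul_le A B⟩
  simpa [transpose_neg, Matrix.neg_mul, trace_neg] using trace_transpose_mul_le (-A) B

lemma Matrix.abs_trace_transpose_mul_add_sub_le (U U' M : Matrix m n ℝ) (b b' : ℝ) :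
    |(Uᵀ * M).trace + b - ((U'ᵀ * M).trace + b')|
      ≤ (‖M‖ + 1) * √(‖U - U'‖ ^ 2 + (b - b') ^ 2) := by
  set D := √(‖U - U'‖ ^ 2 + (b - b') ^ 2)
  have hU : ‖U - U'‖ ≤ D := by
    simpa using Real.abs_le_sqrt (le_add_of_nonneg_right (a := ‖U - U'‖ ^ 2) (sq_nonneg (b - b')))
  have hb : |b - b'| ≤ D := Real.abs_le_sqrt (le_add_of_nonneg_left (sq_nonneg ‖U - U'‖))
  have hsplit : (Uᵀ * M).trace + b - ((U'ᵀ * M).trace + b') = ((U - U')ᵀ * M).trace + (b - b') := by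
    rw [transpose_sub, Matrix.sub_mul, trace_sub]; ring
  calc |(Uᵀ * M).trace + b - ((U'ᵀ * M).trace + b')|
      ≤ ‖U - U'‖ * ‖M‖ + |b - b'| := by
        rw [hsplit]; exact (abs_add_le _ _).trans (by gcongr; exact abs_trace_transpose_mul_le _ _)
    _ ≤ D * ‖M‖ + D := by gcongr
    _ = (‖M‖ + 1) * D := by ring

end Frobenius

section Gradients

open scoped Matrix.Norms.Frobenius

lemma frobNorm_eq_norm {s r : ℕ} (A : Matrix (Fin s) (Fin r) ℝ) : frobNorm A = ‖A‖ :=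
  (Matrix.frobenius_norm_eq_sqrt A).symm

variable {n s t r : ℕ} (X : Fin n → Matrix (Fin s) (Fin t) ℝ) (y : Fin n → ℝ)
  (V : Matrix (Fin t) (Fin r) ℝ)

noncomputable def logisticWeight (U : Matrix (Fin s) (Fin r) ℝ) (b : ℝ) (i : Fin n) : ℝ :=
  (1 + Real.exp (y i * ((Uᵀ * X i * V).trace + b)))⁻¹ * y i

lemma abs_logisticWeight_sub_le (hy : ∀ i, |y i| ≤ 1) (U U' : Matrix (Fin s) (Fin r) ℝ)
    (b b' : ℝ) (i : Fin n) :
    |logisticWeight X y V U b i - logisticWeight X y V U' b' i|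
      ≤ 4⁻¹ * ((‖X i * V‖ + 1) * √(‖U - U'‖ ^ 2 + (b - b') ^ 2)) := by
  refine (Real.abs_inv_one_add_exp_mul_sub_le (hy i) _ _).trans ?_
  gcongr
  simpa only [Matrix.mul_assoc] using Matrix.abs_trace_transpose_mul_add_sub_le U U' (X i * V) b b'

lemma norm_gradU_sub_le (U U' : Matrix (Fin s) (Fin r) ℝ) (b b' : ℝ) :
    ‖gradU X y U V b - gradU X y U' V b'‖
      ≤ 1 / n * ∑ i, |logisticWeight X y V U b i - logisticWeight X y V U' b' i| * ‖X i * V‖ := by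
  calc ‖gradU X y U V b - gradU X y U' V b'‖
      = ‖(-(1 / n : ℝ)) •
          ∑ i, (logisticWeight X y V U b i - logisticWeight X y V U' b' i) • (X i * V)‖ := by
        simp only [gradU, logisticWeight, ← smul_sub, ← Finset.sum_sub_distrib, sub_smul]
    _ ≤ 1 / n * ∑ i, ‖(logisticWeight X y V U b i - logisticWeight X y V U' b' i) • (X i * V)‖ := by
        rw [norm_smul, norm_neg, Real.norm_of_nonneg (by positivity)]
        gcongr
        exact norm_sum_le _ _
    _ = _ := by simp only [norm_smul, Real.norm_eq_abs]

lemma abs_gradB_sub_le (U U' : Matrix (Fin s) (Fin r) ℝ) (b b' : ℝ) :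
    |gradB X y U V b - gradB X y U' V b'|
      ≤ 1 / n * ∑ i, |logisticWeight X y V U b i - logisticWeight X y V U' b' i| := by
  calc |gradB X y U V b - gradB X y U' V b'|
      = |(-(1 / n : ℝ)) * ∑ i, (logisticWeight X y V U b i - logisticWeight X y V U' b' i)| := by
        simp only [gradB, logisticWeight, ← mul_sub, ← Finset.sum_sub_distrib]
    _ ≤ _ := by
        rw [abs_mul, abs_neg, abs_of_nonneg (by positivity)]
        gcongr
        exact Finset.abs_sum_le_sum_abs _ _

lemma sqrt_gradU_gradB_sub_le (hy : ∀ i, |y i| ≤ 1) (U U' : Matrix (Fin s) (Fin r) ℝ)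
    (b b' : ℝ) :
    √(frobNorm (gradU X y U V b - gradU X y U' V b') ^ 2
        + (gradB X y U V b - gradB X y U' V b') ^ 2)
      ≤ 1 / (4 * n) * (∑ i, (frobNorm (X i * V) + 1) ^ 2)
          * √(frobNorm (U - U') ^ 2 + (b - b') ^ 2) := by
  simp only [frobNorm_eq_norm]
  set D := √(‖U - U'‖ ^ 2 + (b - b') ^ 2)
  set δ := fun i => |logisticWeight X y V U b i - logisticWeight X y V U' b' i|
  calc _ ≤ ‖gradU X y U V b - gradU X y U' V b'‖ + |gradB X y U V b - gradB X y U' V b'| := by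
        simpa only [abs_norm] using Real.sqrt_sq_add_sq_le ‖gradU X y U V b - gradU X y U' V b'‖
          (gradB X y U V b - gradB X y U' V b')
    _ ≤ 1 / n * ∑ i, δ i * ‖X i * V‖ + 1 / n * ∑ i, δ i :=
        add_le_add (norm_gradU_sub_le X y V U U' b b') (abs_gradB_sub_le X y V U U' b b')
    _ = 1 / n * ∑ i, δ i * (‖X i * V‖ + 1) := by
        simp only [mul_add, mul_one, Finset.sum_add_distrib]
    _ ≤ 1 / n * ∑ i, 4⁻¹ * ((‖X i * V‖ + 1) * D) * (‖X i * V‖ + 1) := by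
        gcongr with i
        exact abs_logisticWeight_sub_le X y V hy U U' b b' i
    _ = _ := by
        simp only [Finset.mul_sum, Finset.sum_mul]
        refine Finset.sum_congr rfl fun i _ => ?_
        ring

end Gradients

theorem gradUb_lipschitz_general
    (n s t r : ℕ)
    (X : Fin n → Matrix (Fin s) (Fin t) ℝ) (y : Fin n → ℝ)
    (hy : ∀ i, y i = 1 ∨ y i = -1)
    (V : Matrix (Fin t) (Fin r) ℝ)
    (U U' : Matrix (Fin s) (Fin r) ℝ) (b b' : ℝ) :
    Real.sqrt ((frobNorm (gradU X y U V b - gradU X y U' V b')) ^ 2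
        + (gradB X y U V b - gradB X y U' V b') ^ 2)
      ≤ (Real.sqrt 2 / (n : ℝ)) * (∑ i, (frobNorm (X i * V) + 1) ^ 2)
          * Real.sqrt ((frobNorm (U - U')) ^ 2 + (b - b') ^ 2) := by
  have hy_abs : ∀ i, |y i| ≤ 1 := fun i => by rcases hy i with h | h <;> simp [h]
  have hconst : 1 / (4 * n : ℝ) ≤ Real.sqrt 2 / n := by
    rw [← div_div]
    gcongr
    exact (by norm_num : (1 : ℝ) / 4 ≤ 1).trans Real.one_lt_sqrt_two.le
  refine (sqrt_gradU_gradB_sub_le X y V hy_abs U U' b b').trans ?_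
  gcongr

/-- Lemma 1, part (a): for every fixed `V`, the map `(U, b) ↦ (∇_U ℓ, ∇_b ℓ)`
is Lipschitz continuous with constant `L_u = (√2/n) Σᵢ (‖Xᵢ V‖_F + 1)²`,
with respect to the joint Euclidean distance `√(‖U − U'‖_F² + (b − b')²)`. -/
theorem gradUb_lipschitz
    (n s t r : ℕ) (hn : 0 < n) (hr : 1 ≤ r)
    (X : Fin n → Matrix (Fin s) (Fin t) ℝ) (y : Fin n → ℝ)
    (hy : ∀ i, y i = 1 ∨ y i = -1)
    (V : Matrix (Fin t) (Fin r) ℝ)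
    (U U' : Matrix (Fin s) (Fin r) ℝ) (b b' : ℝ) :
    Real.sqrt ((frobNorm (gradU X y U V b - gradU X y U' V b')) ^ 2
        + (gradB X y U V b - gradB X y U' V b') ^ 2)
      ≤ (Real.sqrt 2 / (n : ℝ)) * (∑ i, (frobNorm (X i * V) + 1) ^ 2)
          * Real.sqrt ((frobNorm (U - U')) ^ 2 + (b - b') ^ 2) :=
  gradUb_lipschitz_general n s t r X y hy V U U' b b'
end

section
/- Let {S_N}_{N≥0} be a nonnegative, nonincreasing real sequence, let C > 0, and let α ∈ (0,1). If S_N ≤ C·(S_{N−1} − S_N)^α for all N ≥ 1, then there exists a constant c > 0 such that S_N ≤ c·N^{−α/(1−α)} for all N ≥ 1. -/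
/-!
Put `q = (1 - α) / α`, so that `q + 1 = 1 / α`. Raising the recursion to the power `1 / α` gives
`S_{N+1}^{q+1} ≤ D (S_N - S_{N+1})` with `D = C^{1/α}`. Along this recursion the energy `S_N^{-q}`
grows by a fixed amount `μ > 0` per step: if `S_{N+1} ≥ S_N / 2`, the tangent line of the convex
function `t ↦ t^{-q}` at `S_N` gives an increment of at least `q / (D 2^{q+1})`; otherwise `S_N`
at least halves and the energy grows by `(2^q - 1) S_N^{-q} ≥ (2^q - 1) (S_0 + 1)^{-q}`.
Hence `S_N^{-q} ≥ μ N`, that is `S_N ≤ μ^{-1/q} N^{-1/q}`.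
-/

open Real

lemma one_add_mul_one_sub_le_rpow_neg {t q : ℝ} (ht : 0 < t) (hq : 0 ≤ q) :
    1 + q * (1 - t) ≤ t ^ (-q) :=
  calc 1 + q * (1 - t) ≤ log t * -q + 1 := by nlinarith [log_le_sub_one_of_pos ht]
    _ ≤ exp (log t * -q) := add_one_le_exp _
    _ = t ^ (-q) := (rpow_def_of_pos ht _).symm

lemma rpow_neg_add_mul_sub_div_le {a b q : ℝ} (ha : 0 < a) (hb : 0 < b) (hq : 0 ≤ q) :
    a ^ (-q) + q * (a - b) / a ^ (q + 1) ≤ b ^ (-q) := by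
  have haq : 0 < a ^ (-q) := rpow_pos_of_pos ha _
  have h := one_add_mul_one_sub_le_rpow_neg (div_pos hb ha) hq
  rw [div_rpow hb.le ha.le, le_div_iff₀ haq] at h
  have h_eq : a ^ (-q) + q * (a - b) / a ^ (q + 1) = (1 + q * (1 - b / a)) * a ^ (-q) := by
    rw [rpow_add ha, rpow_one, rpow_neg ha.le]
    field_simp
  rwa [h_eq]

lemma rpow_neg_add_min_le {a b M D q : ℝ} (hb : 0 < b) (hba : b ≤ a) (haM : a ≤ M)
    (hD : 0 < D) (hq : 0 < q) (hdrop : b ^ (q + 1) ≤ D * (a - b)) :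
    a ^ (-q) + min (q / (D * 2 ^ (q + 1))) ((2 ^ q - 1) * M ^ (-q)) ≤ b ^ (-q) := by
  have ha : 0 < a := hb.trans_le hba
  rcases le_or_gt a (2 * b) with hab | hab
  · have hpow : a ^ (q + 1) ≤ 2 ^ (q + 1) * (D * (a - b)) :=
      calc a ^ (q + 1) ≤ (2 * b) ^ (q + 1) := by gcongr
        _ = 2 ^ (q + 1) * b ^ (q + 1) := mul_rpow zero_le_two hb.le
        _ ≤ 2 ^ (q + 1) * (D * (a - b)) := by gcongr
    have hincr : q / (D * 2 ^ (q + 1)) ≤ q * (a - b) / a ^ (q + 1) := by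
      rw [div_le_div_iff₀ (by positivity) (by positivity)]
      nlinarith
    linarith [min_le_left (q / (D * 2 ^ (q + 1))) ((2 ^ q - 1) * M ^ (-q)),
      rpow_neg_add_mul_sub_div_le ha hb hq.le]
  · have h2q : 1 ≤ (2 : ℝ) ^ q := one_le_rpow one_le_two hq.le
    have hM : M ^ (-q) ≤ a ^ (-q) := rpow_le_rpow_of_nonpos ha haM (by linarith)
    have hhalf : 2 ^ q * a ^ (-q) ≤ b ^ (-q) :=
      calc 2 ^ q * a ^ (-q) = (a / 2) ^ (-q) := by
            rw [div_rpow ha.le zero_le_two, rpow_neg zero_le_two, div_inv_eq_mul, mul_comm]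
        _ ≤ b ^ (-q) := rpow_le_rpow_of_nonpos hb (by linarith) (by linarith)
    have hincr : (2 ^ q - 1) * M ^ (-q) ≤ (2 ^ q - 1) * a ^ (-q) := by gcongr
    linarith [min_le_right (q / (D * 2 ^ (q + 1))) ((2 ^ q - 1) * M ^ (-q))]

theorem exists_le_mul_rpow_neg_inv_of_rpow_le_mul_sub {S : ℕ → ℝ} {q D : ℝ} (hq : 0 < q)
    (hD : 0 < D) (hnonneg : ∀ n, 0 ≤ S n) (hS : Antitone S)
    (hdrop : ∀ n, S (n + 1) ^ (q + 1) ≤ D * (S n - S (n + 1))) :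
    ∃ c > 0, ∀ N : ℕ, 1 ≤ N → S N ≤ c * (N : ℝ) ^ (-q⁻¹) := by
  -- `S 0 + 1` rather than `S 0`: Lean's `0 ^ (-q) = 0` would make `μ` vanish when `S 0 = 0`.
  set μ := min (q / (D * 2 ^ (q + 1))) ((2 ^ q - 1) * (S 0 + 1) ^ (-q))
  have hμ : 0 < μ := by
    have : (1 : ℝ) < 2 ^ q := one_lt_rpow one_lt_two hq
    have : 0 < S 0 + 1 := by linarith [hnonneg 0]
    apply lt_min <;> positivity
  have henergy : ∀ N : ℕ, 0 < S N → S 0 ^ (-q) + N * μ ≤ S N ^ (-q) := by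
    intro N
    induction N with
    | zero => simp
    | succ n ih =>
      intro hpos
      have hstep := rpow_neg_add_min_le hpos (hS n.le_succ)
        ((hS n.zero_le).trans (le_add_of_nonneg_right zero_le_one)) hD hq (hdrop n)
      push_cast
      linarith [ih (hpos.trans_le (hS n.le_succ))]
  refine ⟨μ ^ (-q⁻¹), rpow_pos_of_pos hμ _, fun N hN => ?_⟩
  rcases (hnonneg N).eq_or_lt with hzero | hpos
  · rw [← hzero]
    positivity
  have hlow : N * μ ≤ S N ^ (-q) := by
    linarith [henergy N hpos, rpow_nonneg (hnonneg 0) (-q)]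
  have hNμ : 0 < (N : ℝ) * μ := mul_pos (by exact_mod_cast hN) hμ
  calc S N = (S N ^ (-q)) ^ (-q⁻¹) := by
        rw [← rpow_mul (hnonneg N), neg_mul_neg, mul_inv_cancel₀ hq.ne', rpow_one]
    _ ≤ (N * μ) ^ (-q⁻¹) :=
        rpow_le_rpow_of_nonpos hNμ hlow (neg_nonpos.2 (inv_nonneg.2 hq.le))
    _ = μ ^ (-q⁻¹) * N ^ (-q⁻¹) := by rw [mul_rpow (Nat.cast_nonneg N) hμ.le, mul_comm]

lemma rpow_inv_le_mul_of_le_mul_rpow {x y C α : ℝ} (hx : 0 ≤ x) (hy : 0 ≤ y) (hC : 0 ≤ C)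
    (hα : 0 < α) (h : x ≤ C * y ^ α) : x ^ α⁻¹ ≤ C ^ α⁻¹ * y :=
  calc x ^ α⁻¹ ≤ (C * y ^ α) ^ α⁻¹ := rpow_le_rpow hx h (inv_nonneg.2 hα.le)
    _ = C ^ α⁻¹ * y := by rw [mul_rpow hC (rpow_nonneg hy _), rpow_rpow_inv hy hα.ne']

/-- Key recursion lemma for the sublinear convergence rate (Theorem 3, case θ ∈ (1/2,1)):
if `{S_N}` is nonnegative, nonincreasing, `C > 0`, `α ∈ (0,1)` and
`S_N ≤ C (S_{N−1} − S_N)^α` for all `N ≥ 1`, then there is `c > 0` with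
`S_N ≤ c N^{−α/(1−α)}` for all `N ≥ 1`. -/
theorem sublinear_rate_recursion (S : ℕ → ℝ) (C α : ℝ) (hC : 0 < C)
    (hα : α ∈ Set.Ioo (0 : ℝ) 1)
    (hnonneg : ∀ N, 0 ≤ S N)
    (hmono : ∀ N, S (N + 1) ≤ S N)
    (hrec : ∀ N, S (N + 1) ≤ C * (S N - S (N + 1)) ^ α) :
    ∃ c : ℝ, 0 < c ∧ ∀ N : ℕ, 1 ≤ N → S N ≤ c * (N : ℝ) ^ (-(α / (1 - α))) := by
  obtain ⟨hα0, hα1⟩ := hα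
  have hq : 0 < (1 - α) / α := div_pos (by linarith) hα0
  have hq_add_one : (1 - α) / α + 1 = α⁻¹ := by
    field_simp
    ring
  have hdrop : ∀ n, S (n + 1) ^ ((1 - α) / α + 1) ≤ C ^ α⁻¹ * (S n - S (n + 1)) := fun n => by
    rw [hq_add_one]
    exact rpow_inv_le_mul_of_le_mul_rpow (hnonneg _) (sub_nonneg.2 (hmono n)) hC.le hα0 (hrec n)
  obtain ⟨c, hc, hbound⟩ := exists_le_mul_rpow_neg_inv_of_rpow_le_mul_sub hq
    (rpow_pos_of_pos hC _) hnonneg (antitone_nat_of_succ_le hmono) hdrop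
  refine ⟨c, hc, fun N hN => ?_⟩
  rw [← inv_div]
  exact hbound N hN
end

section
/- Assume μ₂ > 0, ν₂ > 0, and that both labels occur (there exist indices i and j with y_i = +1 and y_j = −1). Then the objective F(U,V,b) = ℓ(U,V,b) + μ₁‖U‖₁ + (μ₂/2)‖U‖_F² + ν₁‖V‖₁ + (ν₂/2)‖V‖_F² attains a global minimum over ℝ^{s×r} × ℝ^{t×r} × ℝ; that is, the sparse bilinear logistic regression problem has at least one solution. -/
open Matrix BigOperators

/-- Entrywise ℓ₁ norm of a matrix. -/
noncomputable def l1Norm {s r : ℕ} (A : Matrix (Fin s) (Fin r) ℝ) : ℝ :=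
  ∑ i, ∑ j, |A i j|

/-- Elastic-net regularizer r(U) = μ₁‖U‖₁ + (μ₂/2)‖U‖_F². -/
noncomputable def reg {s r : ℕ} (μ₁ μ₂ : ℝ) (U : Matrix (Fin s) (Fin r) ℝ) : ℝ :=
  μ₁ * l1Norm U + μ₂ / 2 * (frobNorm U) ^ 2

/- ### Auxiliary lemmas -/

lemma aux_log_nonneg (x : ℝ) : 0 ≤ Real.log (1 + Real.exp x) :=
  Real.log_nonneg (by nlinarith [Real.exp_pos x])

lemma aux_le_log (x : ℝ) : x ≤ Real.log (1 + Real.exp x) := by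
  have h := Real.exp_pos x
  calc x = Real.log (Real.exp x) := (Real.log_exp x).symm
    _ ≤ _ := Real.log_le_log h (by linarith)

lemma aux_l1Norm_nonneg {s r : ℕ} (A : Matrix (Fin s) (Fin r) ℝ) : 0 ≤ l1Norm A :=
  Finset.sum_nonneg fun _ _ => Finset.sum_nonneg fun _ _ => abs_nonneg _

lemma aux_frobNorm_nonneg {s r : ℕ} (A : Matrix (Fin s) (Fin r) ℝ) : 0 ≤ frobNorm A :=
  Real.sqrt_nonneg _

lemma aux_reg_nonneg {s r : ℕ} {μ₁ μ₂ : ℝ} (hμ₁ : 0 ≤ μ₁) (hμ₂ : 0 ≤ μ₂)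
    (U : Matrix (Fin s) (Fin r) ℝ) : 0 ≤ reg μ₁ μ₂ U :=
  add_nonneg (mul_nonneg hμ₁ (aux_l1Norm_nonneg U))
    (mul_nonneg (by linarith) (sq_nonneg _))

lemma aux_bilinLoss_nonneg {n s t r : ℕ} (X : Fin n → Matrix (Fin s) (Fin t) ℝ)
    (y : Fin n → ℝ) (U : Matrix (Fin s) (Fin r) ℝ) (V : Matrix (Fin t) (Fin r) ℝ)
    (b : ℝ) : 0 ≤ bilinLoss X y U V b :=
  mul_nonneg (by positivity)
    (Finset.sum_nonneg fun _ _ => aux_log_nonneg _)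

lemma aux_abs_entry_le_frobNorm {s r : ℕ} (A : Matrix (Fin s) (Fin r) ℝ)
    (a : Fin s) (k : Fin r) : |A a k| ≤ frobNorm A := by
  rw [frobNorm, ← Real.sqrt_sq_eq_abs]
  apply Real.sqrt_le_sqrt
  calc (A a k) ^ 2 ≤ ∑ j, (A a j) ^ 2 :=
        Finset.single_le_sum (f := fun j => (A a j) ^ 2)
          (fun _ _ => sq_nonneg _) (Finset.mem_univ k)
    _ ≤ ∑ i, ∑ j, (A i j) ^ 2 :=
        Finset.single_le_sum (f := fun i => ∑ j, (A i j) ^ 2)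
          (fun _ _ => Finset.sum_nonneg fun _ _ => sq_nonneg _) (Finset.mem_univ a)

lemma aux_trace_bound {s t r : ℕ} (U : Matrix (Fin s) (Fin r) ℝ)
    (A : Matrix (Fin s) (Fin t) ℝ) (V : Matrix (Fin t) (Fin r) ℝ)
    {RU M RV : ℝ} (hRU : 0 ≤ RU) (hM : 0 ≤ M)
    (hU : ∀ a k, |U a k| ≤ RU) (hA : ∀ a c, |A a c| ≤ M) (hV : ∀ c k, |V c k| ≤ RV) :
    |(Uᵀ * A * V).trace| ≤ ((r * t * s : ℕ) : ℝ) * (RU * M * RV) := by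
  have hexp : (Uᵀ * A * V).trace = ∑ k, ∑ c, ∑ a, U a k * A a c * V c k := by
    simp [Matrix.trace, Matrix.diag, Matrix.mul_apply, Matrix.transpose_apply,
      Finset.sum_mul]
  rw [hexp]
  calc |∑ k, ∑ c, ∑ a, U a k * A a c * V c k|
      ≤ ∑ k, ∑ c, ∑ a, |U a k * A a c * V c k| := by
        refine (Finset.abs_sum_le_sum_abs _ _).trans (Finset.sum_le_sum fun k _ => ?_)
        refine (Finset.abs_sum_le_sum_abs _ _).trans (Finset.sum_le_sum fun c _ => ?_)
        exact Finset.abs_sum_le_sum_abs _ _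
    _ ≤ ∑ _k : Fin r, ∑ _c : Fin t, ∑ _a : Fin s, RU * M * RV := by
        refine Finset.sum_le_sum fun k _ => Finset.sum_le_sum fun c _ =>
          Finset.sum_le_sum fun a _ => ?_
        rw [abs_mul, abs_mul]
        exact mul_le_mul (mul_le_mul (hU a k) (hA a c) (abs_nonneg _) hRU) (hV c k)
          (abs_nonneg _) (mul_nonneg hRU hM)
    _ = ((r * t * s : ℕ) : ℝ) * (RU * M * RV) := by
        simp [Finset.sum_const, Finset.card_univ]
        ring

set_option maxHeartbeats 1000000 in
/-- Existence of a solution: if `μ₂ > 0`, `ν₂ > 0`, and both labels occur, then the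
sparse bilinear logistic regression objective
`F(U,V,b) = ℓ(U,V,b) + μ₁‖U‖₁ + (μ₂/2)‖U‖_F² + ν₁‖V‖₁ + (ν₂/2)‖V‖_F²`
attains a global minimum over `ℝ^{s×r} × ℝ^{t×r} × ℝ`. -/
theorem objective_attains_min
    (n s t r : ℕ) (hn : 0 < n) (hr : 1 ≤ r)
    (X : Fin n → Matrix (Fin s) (Fin t) ℝ) (y : Fin n → ℝ)
    (hy : ∀ i, y i = 1 ∨ y i = -1)
    (hpos : ∃ i, y i = 1) (hneg : ∃ j, y j = -1)
    (μ₁ μ₂ ν₁ ν₂ : ℝ) (hμ₁ : 0 ≤ μ₁) (hμ₂ : 0 < μ₂) (hν₁ : 0 ≤ ν₁) (hν₂ : 0 < ν₂) :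
    ∃ (U : Matrix (Fin s) (Fin r) ℝ) (V : Matrix (Fin t) (Fin r) ℝ) (b : ℝ),
      ∀ (U' : Matrix (Fin s) (Fin r) ℝ) (V' : Matrix (Fin t) (Fin r) ℝ) (b' : ℝ),
        bilinLoss X y U V b + reg μ₁ μ₂ U + reg ν₁ ν₂ V
          ≤ bilinLoss X y U' V' b' + reg μ₁ μ₂ U' + reg ν₁ ν₂ V' := by
  classical
  have hnR : (0 : ℝ) < n := by exact_mod_cast hn
  -- continuity of the objective
  have hFcont : Continuous (fun p : Matrix (Fin s) (Fin r) ℝ × Matrix (Fin t) (Fin r) ℝ × ℝ =>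
      bilinLoss X y p.1 p.2.1 p.2.2 + reg μ₁ μ₂ p.1 + reg ν₁ ν₂ p.2.1) := by
    apply Continuous.add
    apply Continuous.add
    · -- loss part
      unfold bilinLoss
      apply continuous_const.mul
      apply continuous_finset_sum
      intro i _
      apply Continuous.log
      · exact continuous_const.add (Real.continuous_exp.comp
          (continuous_const.mul ((((continuous_fst.matrix_transpose.matrix_mul
            continuous_const).matrix_mul continuous_snd.fst).matrix_trace).add
            continuous_snd.snd)))
      · intro x; positivity
    · -- reg U
      unfold reg l1Norm frobNorm
      apply Continuous.add
      · exact continuous_const.mul (continuous_finset_sum _ fun a _ =>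
          continuous_finset_sum _ fun k _ => (continuous_fst.matrix_elem a k).abs)
      · exact continuous_const.mul ((Real.continuous_sqrt.comp
          (continuous_finset_sum _ fun a _ => continuous_finset_sum _ fun k _ =>
            (continuous_fst.matrix_elem a k).pow 2)).pow 2)
    · -- reg V
      unfold reg l1Norm frobNorm
      apply Continuous.add
      · exact continuous_const.mul (continuous_finset_sum _ fun a _ =>
          continuous_finset_sum _ fun k _ => ((continuous_snd.fst.matrix_elem a k)).abs)
      · exact continuous_const.mul ((Real.continuous_sqrt.comp
          (continuous_finset_sum _ fun a _ => continuous_finset_sum _ fun k _ =>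
            (continuous_snd.fst.matrix_elem a k).pow 2)).pow 2)
  obtain ⟨F, hFdef⟩ : ∃ f : Matrix (Fin s) (Fin r) ℝ × Matrix (Fin t) (Fin r) ℝ × ℝ → ℝ,
      f = fun p => bilinLoss X y p.1 p.2.1 p.2.2 + reg μ₁ μ₂ p.1 + reg ν₁ ν₂ p.2.1 :=
    ⟨_, rfl⟩
  have hFcont' : Continuous F := by rw [hFdef]; exact hFcont
  obtain ⟨F0, hF0def⟩ : ∃ c : ℝ, c = F (0, 0, 0) := ⟨_, rfl⟩
  have hF0 : 0 ≤ F0 := by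
    rw [hF0def, hFdef]
    exact add_nonneg (add_nonneg (aux_bilinLoss_nonneg _ _ _ _ _)
      (aux_reg_nonneg hμ₁ hμ₂.le _)) (aux_reg_nonneg hν₁ hν₂.le _)
  obtain ⟨RU, hRUdef⟩ : ∃ c : ℝ, c = Real.sqrt (2 * F0 / μ₂) := ⟨_, rfl⟩
  obtain ⟨RV, hRVdef⟩ : ∃ c : ℝ, c = Real.sqrt (2 * F0 / ν₂) := ⟨_, rfl⟩
  have hRU0 : 0 ≤ RU := by rw [hRUdef]; exact Real.sqrt_nonneg _
  have hRV0 : 0 ≤ RV := by rw [hRVdef]; exact Real.sqrt_nonneg _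
  obtain ⟨M, hMdef⟩ : ∃ c : ℝ, c = 1 + ∑ i, ∑ a, ∑ c, |X i a c| := ⟨_, rfl⟩
  have hsumX : (0:ℝ) ≤ ∑ i, ∑ a, ∑ c, |X i a c| :=
    Finset.sum_nonneg fun _ _ => Finset.sum_nonneg fun _ _ =>
      Finset.sum_nonneg fun _ _ => abs_nonneg _
  have hM0 : 0 ≤ M := by rw [hMdef]; linarith
  have hXM : ∀ i a c, |X i a c| ≤ M := by
    intro i a c
    have h1 : |X i a c| ≤ ∑ c', |X i a c'| :=
      Finset.single_le_sum (f := fun c' => |X i a c'|)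
        (fun _ _ => abs_nonneg _) (Finset.mem_univ c)
    have h2 : ∑ c', |X i a c'| ≤ ∑ a', ∑ c', |X i a' c'| :=
      Finset.single_le_sum (f := fun a' => ∑ c', |X i a' c'|)
        (fun _ _ => Finset.sum_nonneg fun _ _ => abs_nonneg _) (Finset.mem_univ a)
    have h3 : ∑ a', ∑ c', |X i a' c'| ≤ ∑ i', ∑ a', ∑ c', |X i' a' c'| :=
      Finset.single_le_sum (f := fun i' => ∑ a', ∑ c', |X i' a' c'|)
        (fun _ _ => Finset.sum_nonneg fun _ _ => Finset.sum_nonneg fun _ _ => abs_nonneg _)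
        (Finset.mem_univ i)
    rw [hMdef]; linarith
  obtain ⟨CB, hCBdef⟩ : ∃ c : ℝ, c = ((r * t * s : ℕ) : ℝ) * (RU * M * RV) := ⟨_, rfl⟩
  have hCB0 : 0 ≤ CB := by
    rw [hCBdef]
    exact mul_nonneg (Nat.cast_nonneg _) (mul_nonneg (mul_nonneg hRU0 hM0) hRV0)
  obtain ⟨RB, hRBdef⟩ : ∃ c : ℝ, c = F0 * n + CB := ⟨_, rfl⟩
  obtain ⟨K1, hK1def⟩ : ∃ A : Set (Matrix (Fin s) (Fin r) ℝ),
      A = {U | ∀ a k, U a k ∈ Set.Icc (-RU) RU} := ⟨_, rfl⟩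
  obtain ⟨K2, hK2def⟩ : ∃ A : Set (Matrix (Fin t) (Fin r) ℝ),
      A = {V | ∀ c k, V c k ∈ Set.Icc (-RV) RV} := ⟨_, rfl⟩
  have hK1 : IsCompact K1 := by
    rw [hK1def]
    have he : {U : Matrix (Fin s) (Fin r) ℝ | ∀ a k, U a k ∈ Set.Icc (-RU) RU} = Set.univ.pi fun _ : Fin s => Set.univ.pi fun _ : Fin r =>
        Set.Icc (-RU) RU := by
      ext U
      constructor
      · intro h
        exact Set.mem_univ_pi.mpr fun a => Set.mem_univ_pi.mpr fun k => h a k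
      · intro h a k
        exact Set.mem_univ_pi.mp (Set.mem_univ_pi.mp h a) k
    rw [he]
    exact isCompact_univ_pi fun _ => isCompact_univ_pi fun _ => isCompact_Icc
  have hK2 : IsCompact K2 := by
    rw [hK2def]
    have he : {V : Matrix (Fin t) (Fin r) ℝ | ∀ c k, V c k ∈ Set.Icc (-RV) RV} = Set.univ.pi fun _ : Fin t => Set.univ.pi fun _ : Fin r =>
        Set.Icc (-RV) RV := by
      ext V
      constructor
      · intro h
        exact Set.mem_univ_pi.mpr fun a => Set.mem_univ_pi.mpr fun k => h a k
      · intro h a k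
        exact Set.mem_univ_pi.mp (Set.mem_univ_pi.mp h a) k
    rw [he]
    exact isCompact_univ_pi fun _ => isCompact_univ_pi fun _ => isCompact_Icc
  obtain ⟨K, hKdef⟩ : ∃ A : Set (Matrix (Fin s) (Fin r) ℝ × Matrix (Fin t) (Fin r) ℝ × ℝ),
      A = K1 ×ˢ (K2 ×ˢ Set.Icc (-RB) RB) := ⟨_, rfl⟩
  have hK : IsCompact K := by
    rw [hKdef]; exact hK1.prod (hK2.prod isCompact_Icc)
  obtain ⟨S, hSdef⟩ : ∃ A : Set (Matrix (Fin s) (Fin r) ℝ × Matrix (Fin t) (Fin r) ℝ × ℝ),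
      A = {p | F p ≤ F0} := ⟨_, rfl⟩
  have hSclosed : IsClosed S := by
    rw [hSdef]; exact isClosed_le hFcont' continuous_const
  -- the sublevel set is contained in K
  have hsub : S ⊆ K := by
    rintro ⟨U, V, b⟩ hp
    rw [hSdef, Set.mem_setOf_eq, hFdef] at hp
    have hp' : bilinLoss X y U V b + reg μ₁ μ₂ U + reg ν₁ ν₂ V ≤ F0 := hp
    have hlossn : 0 ≤ bilinLoss X y U V b := aux_bilinLoss_nonneg _ _ _ _ _
    have hl1U : 0 ≤ μ₁ * l1Norm U := mul_nonneg hμ₁ (aux_l1Norm_nonneg U)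
    have hl1V : 0 ≤ ν₁ * l1Norm V := mul_nonneg hν₁ (aux_l1Norm_nonneg V)
    have hregU : reg μ₁ μ₂ U = μ₁ * l1Norm U + μ₂ / 2 * (frobNorm U) ^ 2 := rfl
    have hregV : reg ν₁ ν₂ V = ν₁ * l1Norm V + ν₂ / 2 * (frobNorm V) ^ 2 := rfl
    rw [hregU, hregV] at hp'
    have hsqU : 0 ≤ μ₂ / 2 * (frobNorm U) ^ 2 :=
      mul_nonneg (by linarith) (sq_nonneg _)
    have hsqV : 0 ≤ ν₂ / 2 * (frobNorm V) ^ 2 :=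
      mul_nonneg (by linarith) (sq_nonneg _)
    have hquadU : μ₂ / 2 * (frobNorm U) ^ 2 ≤ F0 := by linarith
    have hquadV : ν₂ / 2 * (frobNorm V) ^ 2 ≤ F0 := by linarith
    have hfU : frobNorm U ≤ RU := by
      have hsq : (frobNorm U) ^ 2 ≤ 2 * F0 / μ₂ := by
        rw [le_div_iff₀ hμ₂]; linarith
      have h0 : 0 ≤ frobNorm U := aux_frobNorm_nonneg U
      calc frobNorm U = Real.sqrt ((frobNorm U) ^ 2) := (Real.sqrt_sq h0).symm
        _ ≤ Real.sqrt (2 * F0 / μ₂) := Real.sqrt_le_sqrt hsq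
        _ = RU := hRUdef.symm
    have hfV : frobNorm V ≤ RV := by
      have hsq : (frobNorm V) ^ 2 ≤ 2 * F0 / ν₂ := by
        rw [le_div_iff₀ hν₂]; linarith
      have h0 : 0 ≤ frobNorm V := aux_frobNorm_nonneg V
      calc frobNorm V = Real.sqrt ((frobNorm V) ^ 2) := (Real.sqrt_sq h0).symm
        _ ≤ Real.sqrt (2 * F0 / ν₂) := Real.sqrt_le_sqrt hsq
        _ = RV := hRVdef.symm
    have hUE : ∀ a k, |U a k| ≤ RU := fun a k =>
      (aux_abs_entry_le_frobNorm U a k).trans hfU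
    have hVE : ∀ c k, |V c k| ≤ RV := fun c k =>
      (aux_abs_entry_le_frobNorm V c k).trans hfV
    have htr : ∀ i, |(Uᵀ * X i * V).trace| ≤ CB := by
      intro i
      rw [hCBdef]
      exact aux_trace_bound U (X i) V hRU0 hM0 hUE (fun a c => hXM i a c) hVE
    -- bound on b
    have hterm : ∀ i, Real.log (1 + Real.exp (-(y i) * ((Uᵀ * X i * V).trace + b)))
        ≤ F0 * n := by
      intro i
      have hsingle : Real.log (1 + Real.exp (-(y i) * ((Uᵀ * X i * V).trace + b)))
          ≤ ∑ i', Real.log (1 + Real.exp (-(y i') * ((Uᵀ * X i' * V).trace + b))) :=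
        Finset.single_le_sum
          (f := fun i' => Real.log (1 + Real.exp (-(y i') * ((Uᵀ * X i' * V).trace + b))))
          (fun _ _ => aux_log_nonneg _) (Finset.mem_univ i)
      have hloss_le : bilinLoss X y U V b ≤ F0 := by linarith
      have h2 : (1 / (n:ℝ)) * Real.log (1 + Real.exp (-(y i) * ((Uᵀ * X i * V).trace + b)))
          ≤ F0 := by
        refine le_trans ?_ hloss_le
        unfold bilinLoss
        exact mul_le_mul_of_nonneg_left hsingle (by positivity)
      rw [one_div, inv_mul_eq_div] at h2
      exact (div_le_iff₀ hnR).mp h2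
    obtain ⟨ip, hip⟩ := hpos
    obtain ⟨jn, hjn⟩ := hneg
    have habsp := abs_le.mp (htr ip)
    have habsn := abs_le.mp (htr jn)
    have hb1 : -RB ≤ b := by
      have h1 := (aux_le_log _).trans (hterm ip)
      rw [hip] at h1
      rw [hRBdef]
      have h2 := habsp.2
      nlinarith
    have hb2 : b ≤ RB := by
      have h1 := (aux_le_log _).trans (hterm jn)
      rw [hjn] at h1
      rw [hRBdef]
      have h2 := habsn.1
      nlinarith
    rw [hKdef]
    refine Set.mem_prod.mpr ⟨?_, Set.mem_prod.mpr ⟨?_, ?_⟩⟩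
    · rw [hK1def]
      exact fun a k => Set.mem_Icc.mpr (abs_le.mp (hUE a k))
    · rw [hK2def]
      exact fun c k => Set.mem_Icc.mpr (abs_le.mp (hVE c k))
    · exact Set.mem_Icc.mpr ⟨hb1, hb2⟩
  have hScomp : IsCompact S := hK.of_isClosed_subset hSclosed hsub
  have h0S : ((0 : Matrix (Fin s) (Fin r) ℝ), (0 : Matrix (Fin t) (Fin r) ℝ), (0:ℝ)) ∈ S := by
    rw [hSdef, Set.mem_setOf_eq]
    exact le_of_eq hF0def.symm
  have hSne : S.Nonempty := ⟨(0, 0, 0), h0S⟩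
  obtain ⟨p0, hp0S, hmin⟩ := hScomp.exists_isMinOn hSne hFcont'.continuousOn
  refine ⟨p0.1, p0.2.1, p0.2.2, fun U' V' b' => ?_⟩
  by_cases hcase : (U', V', b') ∈ S
  · have h1 : F p0 ≤ F (U', V', b') := hmin hcase
    simp only [hFdef] at h1
    exact h1
  · have h1 : F p0 ≤ F (0, 0, 0) := hmin h0S
    have h2 : F (0, 0, 0) ≤ F (U', V', b') := by
      rw [hSdef, Set.mem_setOf_eq] at hcase
      rw [← hF0def]
      exact le_of_lt (not_le.mp hcase)
    have h3 := h1.trans h2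
    simp only [hFdef] at h3
    exact h3
end

section
/- Let ℓ(U,V,b) = (1/n) Σ_{i=1}^n log(1 + exp(−y_i (tr(Uᵀ X_i V) + b))). Fix V ∈ ℝ^{t×r} and let L ≥ (√2/n) Σ_{i=1}^n (‖X_i V‖_F + 1)². Then for all (U,b), (Ũ,b̃) ∈ ℝ^{s×r} × ℝ: ℓ(Ũ,V,b̃) ≤ ℓ(U,V,b) + ⟨∇_U ℓ(U,V,b), Ũ − U⟩ + ∇_b ℓ(U,V,b)·(b̃ − b) + (L/2)‖Ũ − U‖_F² + (L/2)(b̃ − b)². -/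
open Matrix BigOperators

/-! The softplus `x ↦ log (1 + exp x)` has derivative `sigmoid` and second derivative
`sigmoid * (1 - sigmoid) ≤ 1/4`, so it lies below its tangent line plus `c ^ 2 / 8`.
The margin `tr (Uᵀ Xᵢ V) + b` of each sample is affine in `(U, b)` with slope `(Xᵢ V, 1)`;
applying the softplus bound sample by sample and bounding the squared change of the margin by
Cauchy–Schwarz, `(⟨Xᵢ V, D⟩ + e)² ≤ (‖Xᵢ V‖ + 1)² (‖D‖² + e²)`, gives the inequality with the
constant `(1 / 4n) Σᵢ (‖Xᵢ V‖ + 1)²`, which is at most `L`. -/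

open Real Set

theorem ConvexOn.add_mul_sub_le_of_hasDerivAt {g : ℝ → ℝ} {g' x : ℝ}
    (hg : ConvexOn ℝ univ g) (hd : HasDerivAt g g' x) (y : ℝ) :
    g x + g' * (y - x) ≤ g y := by
  rcases lt_trichotomy x y with hxy | rfl | hyx
  · have := hg.le_slope_of_hasDerivAt trivial trivial hxy hd
    rw [slope_def_field, le_div_iff₀ (sub_pos.2 hxy)] at this
    linarith
  · simp
  · have := hg.slope_le_of_hasDerivAt trivial trivial hyx hd
    rw [slope_def_field, div_le_iff₀ (sub_pos.2 hyx)] at this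
    linarith

theorem le_add_mul_sub_add_sq_of_hasDerivAt {f f' f'' : ℝ → ℝ} {K : ℝ}
    (hf : ∀ x, HasDerivAt f (f' x) x) (hf' : ∀ x, HasDerivAt f' (f'' x) x)
    (hK : ∀ x, f'' x ≤ K) (x y : ℝ) :
    f y ≤ f x + f' x * (y - x) + K / 2 * (y - x) ^ 2 := by
  set g : ℝ → ℝ := fun z => K / 2 * z ^ 2 - f z
  have hg (z : ℝ) : HasDerivAt g (K * z - f' z) z :=
    ((hasDerivAt_pow 2 z).const_mul (K / 2)).sub (hf z) |>.congr_deriv (by ring)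
  have hg' (z : ℝ) : HasDerivAt (fun z => K * z - f' z) (K - f'' z) z :=
    ((hasDerivAt_id' z).const_mul K).sub (hf' z) |>.congr_deriv (by ring)
  have hconvex : ConvexOn ℝ univ g := by
    refine Monotone.convexOn_univ_of_deriv (fun z => (hg z).differentiableAt) ?_
    rw [show deriv g = fun z => K * z - f' z from funext fun z => (hg z).deriv]
    exact monotone_of_deriv_nonneg (fun z => (hg' z).differentiableAt)
      fun z => (hg' z).deriv ▸ sub_nonneg.2 (hK z)
  have := hconvex.add_mul_sub_le_of_hasDerivAt (hg x) y
  simp only [g] at this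
  nlinarith

theorem hasDerivAt_log_one_add_exp (x : ℝ) :
    HasDerivAt (fun x => log (1 + exp x)) (sigmoid x) x := by
  convert ((hasDerivAt_exp x).const_add 1).log (by positivity) using 1
  rw [sigmoid_def, exp_neg]
  field_simp
  ring

theorem log_one_add_exp_add_le (w c : ℝ) :
    log (1 + exp (w + c)) ≤ log (1 + exp w) + sigmoid w * c + c ^ 2 / 8 := by
  have := le_add_mul_sub_add_sq_of_hasDerivAt (K := 1 / 4) hasDerivAt_log_one_add_exp
    hasDerivAt_sigmoid (fun x => by nlinarith [sq_nonneg (sigmoid x - 1 / 2)]) w (w + c)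
  convert this using 2 <;> ring

section Frobenius

variable {s r : ℕ}

theorem frobNorm_nonneg (A : Matrix (Fin s) (Fin r) ℝ) : 0 ≤ frobNorm A := sqrt_nonneg _

theorem frobNorm_sq (A : Matrix (Fin s) (Fin r) ℝ) : frobNorm A ^ 2 = ∑ i, ∑ j, A i j ^ 2 :=
  sq_sqrt (by positivity)

theorem trace_transpose_mul_eq_frobInner (A D : Matrix (Fin s) (Fin r) ℝ) :
    (Dᵀ * A).trace = frobInner A D := by
  simp only [frobInner, trace, diag, mul_apply, transpose_apply]
  rw [Finset.sum_comm]
  simp only [mul_comm]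

theorem trace_transpose_mul_mul_eq_add_frobInner {t : ℕ} (U U' : Matrix (Fin s) (Fin r) ℝ)
    (M : Matrix (Fin s) (Fin t) ℝ) (V : Matrix (Fin t) (Fin r) ℝ) :
    (U'ᵀ * M * V).trace = (Uᵀ * M * V).trace + frobInner (M * V) (U' - U) := by
  rw [← trace_transpose_mul_eq_frobInner, ← trace_add, transpose_sub, Matrix.sub_mul]
  simp only [Matrix.mul_assoc, add_sub_cancel]

-- Cauchy–Schwarz in `ℝ^{s×r} × ℝ`, pairing `(A, 1)` with `(D, e)`.
theorem frobInner_add_sq_le (A D : Matrix (Fin s) (Fin r) ℝ) (e : ℝ) :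
    (frobInner A D + e) ^ 2 ≤ (frobNorm A ^ 2 + 1) * (frobNorm D ^ 2 + e ^ 2) := by
  have := Finset.sum_mul_sq_le_sq_mul_sq (Finset.univ : Finset ((Fin s × Fin r) ⊕ Unit))
    (Sum.elim (fun p => A p.1 p.2) fun _ => 1) (Sum.elim (fun p => D p.1 p.2) fun _ => e)
  simpa [Fintype.sum_sum_type, Fintype.sum_prod_type, frobInner, frobNorm_sq] using this

end Frobenius

theorem log_one_add_exp_neg_mul_add_le {y : ℝ} (hy : y ^ 2 ≤ 1) (m δ : ℝ) :
    log (1 + exp (-y * (m + δ)))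
      ≤ log (1 + exp (-y * m)) - (1 + exp (y * m))⁻¹ * y * δ + δ ^ 2 / 8 := by
  have h := log_one_add_exp_add_le (-(y * m)) (-(y * δ))
  rw [sigmoid_def, neg_neg, ← neg_add, ← mul_add] at h
  have hδ : (-(y * δ)) ^ 2 ≤ δ ^ 2 := by nlinarith [sq_nonneg δ]
  simp only [neg_mul]
  linarith

section BilinearLogistic

variable {n s t r : ℕ} (X : Fin n → Matrix (Fin s) (Fin t) ℝ) (y : Fin n → ℝ)
  (V : Matrix (Fin t) (Fin r) ℝ)

theorem frobInner_gradU_add_gradB_mul (U D : Matrix (Fin s) (Fin r) ℝ) (b e : ℝ) :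
    frobInner (gradU X y U V b) D + gradB X y U V b * e
      = -(1 / (n : ℝ) * ∑ i, (1 + exp (y i * ((Uᵀ * X i * V).trace + b)))⁻¹ * y i
          * (frobInner (X i * V) D + e)) := by
  simp only [← trace_transpose_mul_eq_frobInner, gradU, gradB, Matrix.mul_smul, Matrix.mul_sum,
    trace_smul, trace_sum, smul_eq_mul, Finset.mul_sum, Finset.sum_mul, ← Finset.sum_add_distrib,
    ← Finset.sum_neg_distrib]
  refine Finset.sum_congr rfl fun i _ => ?_
  ring

theorem inv_mul_sum_sq_div_eight_le {L : ℝ}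
    (hL : (Real.sqrt 2 / (n : ℝ)) * ∑ i, (frobNorm (X i * V) + 1) ^ 2 ≤ L)
    (D : Matrix (Fin s) (Fin r) ℝ) (e : ℝ) :
    1 / (n : ℝ) * ∑ i, (frobInner (X i * V) D + e) ^ 2 / 8
      ≤ L / 2 * frobNorm D ^ 2 + L / 2 * e ^ 2 := by
  set T := ∑ i, (frobNorm (X i * V) + 1) ^ 2
  set Q := frobNorm D ^ 2 + e ^ 2
  have hQ : 0 ≤ Q := by positivity
  have hsum : ∑ i, (frobInner (X i * V) D + e) ^ 2 / 8 ≤ T * Q / 8 := by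
    rw [Finset.sum_mul, Finset.sum_div]
    gcongr with i
    refine (frobInner_add_sq_le _ D e).trans (mul_le_mul_of_nonneg_right ?_ hQ)
    nlinarith [frobNorm_nonneg (X i * V)]
  have hT : 1 / (n : ℝ) * T ≤ L := by
    refine le_trans ?_ hL
    gcongr
    exact one_le_sqrt.2 one_le_two
  have hL0 : 0 ≤ L := le_trans (by positivity) hT
  calc 1 / (n : ℝ) * ∑ i, (frobInner (X i * V) D + e) ^ 2 / 8
      ≤ 1 / (n : ℝ) * (T * Q / 8) := by gcongr
    _ = 1 / (n : ℝ) * T * Q / 8 := by ring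
    _ ≤ L * Q / 8 := by gcongr
    _ ≤ L / 2 * frobNorm D ^ 2 + L / 2 * e ^ 2 := by nlinarith

end BilinearLogistic

theorem descent_inequality_general
    (n s t r : ℕ)
    (X : Fin n → Matrix (Fin s) (Fin t) ℝ) (y : Fin n → ℝ)
    (hy : ∀ i, y i = 1 ∨ y i = -1)
    (V : Matrix (Fin t) (Fin r) ℝ) (L : ℝ)
    (hL : (Real.sqrt 2 / (n : ℝ)) * ∑ i, (frobNorm (X i * V) + 1) ^ 2 ≤ L)
    (U U' : Matrix (Fin s) (Fin r) ℝ) (b b' : ℝ) :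
    bilinLoss X y U' V b'
      ≤ bilinLoss X y U V b + frobInner (gradU X y U V b) (U' - U)
        + gradB X y U V b * (b' - b)
        + L / 2 * (frobNorm (U' - U)) ^ 2 + L / 2 * (b' - b) ^ 2 := by
  set D := U' - U
  set e := b' - b
  set m : Fin n → ℝ := fun i => (Uᵀ * X i * V).trace + b
  set δ : Fin n → ℝ := fun i => frobInner (X i * V) D + e
  have hmargin (i : Fin n) : (U'ᵀ * X i * V).trace + b' = m i + δ i := by
    simp only [m, δ, e, trace_transpose_mul_mul_eq_add_frobInner U U']
    ring
  have hy2 (i : Fin n) : y i ^ 2 ≤ 1 := by rcases hy i with h | h <;> simp [h]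
  calc bilinLoss X y U' V b'
      ≤ 1 / (n : ℝ) * ∑ i, (log (1 + exp (-y i * m i))
          - (1 + exp (y i * m i))⁻¹ * y i * δ i + δ i ^ 2 / 8) := by
        unfold bilinLoss
        gcongr with i
        rw [hmargin]
        exact log_one_add_exp_neg_mul_add_le (hy2 i) _ _
    _ = bilinLoss X y U V b + (frobInner (gradU X y U V b) D + gradB X y U V b * e)
          + 1 / (n : ℝ) * ∑ i, δ i ^ 2 / 8 := by
        rw [frobInner_gradU_add_gradB_mul]
        simp only [bilinLoss, Finset.sum_add_distrib, Finset.sum_sub_distrib, m, δ]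
        ring
    _ ≤ _ := by
        have := inv_mul_sum_sq_div_eight_le X V hL D e
        linarith

/-- Descent inequality: if `L ≥ (√2/n) Σᵢ (‖Xᵢ V‖_F + 1)²` (the Lipschitz constant of
Lemma 1), then for all `(U, b)` and `(U', b')`,
`ℓ(U',V,b') ≤ ℓ(U,V,b) + ⟨∇_U ℓ(U,V,b), U'−U⟩ + ∇_b ℓ(U,V,b)(b'−b)
 + (L/2)‖U'−U‖_F² + (L/2)(b'−b)²`. -/
theorem descent_inequality
    (n s t r : ℕ) (hn : 0 < n) (hr : 1 ≤ r)
    (X : Fin n → Matrix (Fin s) (Fin t) ℝ) (y : Fin n → ℝ)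
    (hy : ∀ i, y i = 1 ∨ y i = -1)
    (V : Matrix (Fin t) (Fin r) ℝ) (L : ℝ)
    (hL : (Real.sqrt 2 / (n : ℝ)) * ∑ i, (frobNorm (X i * V) + 1) ^ 2 ≤ L)
    (U U' : Matrix (Fin s) (Fin r) ℝ) (b b' : ℝ) :
    bilinLoss X y U' V b'
      ≤ bilinLoss X y U V b + frobInner (gradU X y U V b) (U' - U)
        + gradB X y U V b * (b' - b)
        + L / 2 * (frobNorm (U' - U)) ^ 2 + L / 2 * (b' - b) ^ 2 :=
  descent_inequality_general n s t r X y hy V L hL U U' b b'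
end
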